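/- arXiv:1205.6522 — 7 statements merged into one kernel-verified Lean document; each statement's English description precedes it below -/
import Mathlib

section
/- Let 𝒱 be a left skew-closed category, 𝒜 a 𝒱-category, K an object of 𝒜, and T : 𝒜 → 𝒱 a 𝒱-functor. Then the assignment sending a 𝒱-natural transformation θ : 𝒜(K,-) ⇒ T to the morphism θ_K ∘ j_K : I → TK is a bijection from the set of 𝒱-natural transformations 𝒜(K,-) ⇒ T to the hom-set 𝒱(I,TK); its inverse sends ξ : I → TK to the family with components i_{TA} ∘ [ξ,1] ∘ T_{K,A} : 𝒜(K,A) → TA. -/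
open CategoryTheory

universe v u w

/-- A left skew-closed category structure on a category `V` (Street, "Skew-closed categories"). -/
structure SkewClosedStruct (V : Type u) [Category.{v} V] where
  ihom : V → V → V
  imap : ∀ {A A' B B' : V}, (A' ⟶ A) → (B ⟶ B') → (ihom A B ⟶ ihom A' B')
  imap_id : ∀ (A B : V), imap (𝟙 A) (𝟙 B) = 𝟙 (ihom A B)
  imap_comp : ∀ {A A' A'' B B' B'' : V} (f : A' ⟶ A) (f' : A'' ⟶ A') (g : B ⟶ B') (g' : B' ⟶ B''),
      imap (f' ≫ f) (g ≫ g') = imap f g ≫ imap f' g'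
  unit : V
  i : ∀ A : V, ihom unit A ⟶ A
  i_natural : ∀ {A B : V} (f : A ⟶ B), imap (𝟙 unit) f ≫ i B = i A ≫ f
  j : ∀ A : V, unit ⟶ ihom A A
  j_natural : ∀ {A B : V} (f : A ⟶ B), j A ≫ imap (𝟙 A) f = j B ≫ imap f (𝟙 B)
  L : ∀ A B C : V, ihom B C ⟶ ihom (ihom A B) (ihom A C)
  L_natural : ∀ {B B' C C' : V} (A : V) (f : B' ⟶ B) (g : C ⟶ C'),
      imap f g ≫ L A B' C' = L A B C ≫ imap (imap (𝟙 A) f) (imap (𝟙 A) g)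
  L_extranatural : ∀ {A A' : V} (h : A' ⟶ A) (B C : V),
      L A B C ≫ imap (𝟙 (ihom A B)) (imap h (𝟙 C))
        = L A' B C ≫ imap (imap h (𝟙 B)) (𝟙 (ihom A' C))
  SCC1 : ∀ A B C D : V,
      L A C D ≫ L (ihom A B) (ihom A C) (ihom A D) ≫
          imap (L A B C) (𝟙 (ihom (ihom A B) (ihom A D)))
        = L B C D ≫ imap (𝟙 (ihom B C)) (L A B D)
  SCC2 : ∀ A C : V, L A A C ≫ imap (j A) (𝟙 (ihom A C)) ≫ i (ihom A C) = 𝟙 (ihom A C)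
  SCC3 : ∀ A B : V, j B ≫ L A B B = j (ihom A B)
  SCC4 : ∀ B C : V, L unit B C ≫ imap (𝟙 (ihom unit B)) (i C) = imap (i B) (𝟙 C)
  SCC5 : j unit ≫ i unit = 𝟙 unit

/-- A category enriched in the left skew-closed category `𝒱`. -/
structure VCat (V : Type u) [Category.{v} V] (𝒱 : SkewClosedStruct V) where
  Obj : Type w
  Hom : Obj → Obj → V
  id : ∀ A, 𝒱.unit ⟶ Hom A A
  comp : ∀ A B C, Hom B C ⟶ 𝒱.ihom (Hom A B) (Hom A C)
  EC1 : ∀ A B C D,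
      comp A C D ≫ 𝒱.L (Hom A B) (Hom A C) (Hom A D) ≫
          𝒱.imap (comp A B C) (𝟙 (𝒱.ihom (Hom A B) (Hom A D)))
        = comp B C D ≫ 𝒱.imap (𝟙 (Hom B C)) (comp A B D)
  EC2 : ∀ A C, comp A A C ≫ 𝒱.imap (id A) (𝟙 (Hom A C)) ≫ 𝒱.i (Hom A C) = 𝟙 (Hom A C)
  EC3 : ∀ A B, id B ≫ comp A B B = 𝒱.j (Hom A B)

/-- A `𝒱`-functor between `𝒱`-categories. -/
structure VFun {V : Type u} [Category.{v} V] {𝒱 : SkewClosedStruct V}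
    (𝒜 : VCat.{v, u, w} V 𝒱) (𝒳 : VCat.{v, u, w} V 𝒱) where
  obj : 𝒜.Obj → 𝒳.Obj
  map : ∀ A B, 𝒜.Hom A B ⟶ 𝒳.Hom (obj A) (obj B)
  EF1 : ∀ A B C,
      map A C ≫ 𝒳.comp (obj B) (obj A) (obj C) ≫
          𝒱.imap (map B A) (𝟙 (𝒳.Hom (obj B) (obj C)))
        = 𝒜.comp B A C ≫ 𝒱.imap (𝟙 (𝒜.Hom B A)) (map B C)
  EF2 : ∀ A, 𝒜.id A ≫ map A A = 𝒳.id (obj A)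

/-- The ground skew-closed category `𝒱`, regarded as a `𝒱`-category. -/
@[reducible] def SkewClosedStruct.self {V : Type u} [Category.{v} V] (𝒱 : SkewClosedStruct V) :
    VCat.{v, u, u} V 𝒱 where
  Obj := V
  Hom := 𝒱.ihom
  id := 𝒱.j
  comp := 𝒱.L
  EC1 := 𝒱.SCC1
  EC2 := 𝒱.SCC2
  EC3 := 𝒱.SCC3

/-- A `𝒱`-natural transformation between `𝒱`-functors with values in `𝒱` itself. -/
structure VNat {V : Type u} [Category.{v} V] {𝒱 : SkewClosedStruct V}
    {𝒜 : VCat.{v, u, u} V 𝒱} (S T : VFun 𝒜 𝒱.self) where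
  app : ∀ A, S.obj A ⟶ T.obj A
  naturality : ∀ A B,
      T.map A B ≫ 𝒱.imap (app A) (𝟙 (T.obj B))
        = S.map A B ≫ 𝒱.imap (𝟙 (S.obj A)) (app B)

/-- The representable `𝒱`-functor `𝒜(K,-) : 𝒜 ⟶ 𝒱`. -/
def VCat.repr {V : Type u} [Category.{v} V] {𝒱 : SkewClosedStruct V}
    (𝒜 : VCat.{v, u, u} V 𝒱) (K : 𝒜.Obj) : VFun 𝒜 𝒱.self where
  obj := fun A => 𝒜.Hom K A
  map := fun A B => 𝒜.comp K A B
  EF1 := fun A B C => 𝒜.EC1 K B A C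
  EF2 := fun A => 𝒜.EC3 K A

/-! A `𝒱`-natural `θ : 𝒜(K,-) ⇒ T` is determined by `ξ = j_K ≫ θ_K`: naturality of `θ` at
`(K, A)` followed by the unit law EC2 gives `θ_A = T_{K,A} ≫ [ξ,1] ≫ i`. Conversely, for any
`ξ : I ⟶ X` the evaluation `[ξ,1] ≫ i : [X,Y] ⟶ Y` is `𝒱`-natural in `Y` (extranaturality of `L`
and SCC4), so whiskering it with `T_{K,-}` gives a `𝒱`-natural transformation, and EF2 together
with `j_X ≫ [ξ,1] ≫ i = ξ` (SCC5) recovers `ξ`. -/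

namespace SkewClosedStruct

variable {V : Type u} [Category.{v} V] (𝒱 : SkewClosedStruct V)

theorem imap_comp_left {A A' A'' : V} (f : A' ⟶ A) (f' : A'' ⟶ A') (B : V) :
    𝒱.imap (f' ≫ f) (𝟙 B) = 𝒱.imap f (𝟙 B) ≫ 𝒱.imap f' (𝟙 B) := by
  rw [← 𝒱.imap_comp, Category.comp_id]

theorem imap_comp_right (A : V) {B B' B'' : V} (g : B ⟶ B') (g' : B' ⟶ B'') :
    𝒱.imap (𝟙 A) (g ≫ g') = 𝒱.imap (𝟙 A) g ≫ 𝒱.imap (𝟙 A) g' := by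
  rw [← 𝒱.imap_comp, Category.comp_id]

theorem imap_comm {A A' B B' : V} (f : A' ⟶ A) (g : B ⟶ B') :
    𝒱.imap f (𝟙 B) ≫ 𝒱.imap (𝟙 A') g = 𝒱.imap (𝟙 A) g ≫ 𝒱.imap f (𝟙 B') := by
  rw [← 𝒱.imap_comp, ← 𝒱.imap_comp, Category.comp_id, Category.comp_id, Category.id_comp,
    Category.id_comp]

def evAt {X : V} (ξ : 𝒱.unit ⟶ X) (Y : V) : 𝒱.ihom X Y ⟶ Y :=
  𝒱.imap ξ (𝟙 Y) ≫ 𝒱.i Y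

theorem evAt_comp {X X' : V} (f : X ⟶ X') (ξ : 𝒱.unit ⟶ X) (Y : V) :
    𝒱.evAt (ξ ≫ f) Y = 𝒱.imap f (𝟙 Y) ≫ 𝒱.evAt ξ Y := by
  rw [evAt, evAt, imap_comp_left, Category.assoc]

theorem j_evAt {X : V} (ξ : 𝒱.unit ⟶ X) : 𝒱.j X ≫ 𝒱.evAt ξ X = ξ := by
  rw [evAt, ← reassoc_of% (𝒱.j_natural ξ), 𝒱.i_natural, reassoc_of% 𝒱.SCC5]

/-- `evAt ξ` is `𝒱`-natural in `Y`. -/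
theorem L_comp_imap_evAt {X : V} (ξ : 𝒱.unit ⟶ X) (B C : V) :
    𝒱.L X B C ≫ 𝒱.imap (𝟙 _) (𝒱.evAt ξ C) = 𝒱.imap (𝒱.evAt ξ B) (𝟙 C) := by
  rw [evAt, evAt, imap_comp_right, reassoc_of% (𝒱.L_extranatural ξ B C), imap_comm,
    reassoc_of% (𝒱.SCC4 B C), imap_comp_left]

end SkewClosedStruct

section Yoneda

variable {V : Type u} [Category.{v} V] {𝒱 : SkewClosedStruct V} {𝒜 : VCat.{v, u, u} V 𝒱}

theorem VNat.ext {S T : VFun 𝒜 𝒱.self} {θ θ' : VNat S T} (h : θ.app = θ'.app) : θ = θ' := by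
  cases θ; cases θ'; cases h; rfl

/-- Stated for a bare family in `V`: the components of a `VNat (𝒜.repr K) T` have source
`(𝒜.repr K).obj A`, which is `𝒜.Hom K A` only after unfolding `VCat.repr`, and `rw` cannot
see through that. -/
theorem VCat.eq_map_comp_evAt_of_naturality {K : 𝒜.Obj} {T : VFun 𝒜 𝒱.self}
    (θ : ∀ A, 𝒜.Hom K A ⟶ T.obj A)
    (hθ : ∀ A, T.map K A ≫ 𝒱.imap (θ K) (𝟙 (T.obj A)) = 𝒜.comp K K A ≫ 𝒱.imap (𝟙 _) (θ A))
    (A : 𝒜.Obj) : θ A = T.map K A ≫ 𝒱.evAt (𝒜.id K ≫ θ K) (T.obj A) := by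
  rw [𝒱.evAt_comp, reassoc_of% (hθ A), SkewClosedStruct.evAt,
    ← reassoc_of% (𝒱.imap_comm (𝒜.id K) (θ A)), 𝒱.i_natural, reassoc_of% (𝒜.EC2 K A)]

theorem VNat.app_eq_map_comp_evAt {K : 𝒜.Obj} {T : VFun 𝒜 𝒱.self} (θ : VNat (𝒜.repr K) T)
    (A : 𝒜.Obj) : θ.app A = T.map K A ≫ 𝒱.evAt (𝒜.id K ≫ θ.app K) (T.obj A) :=
  VCat.eq_map_comp_evAt_of_naturality (K := K) θ.app (θ.naturality K) A

theorem VFun.map_comp_evAt_naturality (T : VFun 𝒜 𝒱.self) {K : 𝒜.Obj} (ξ : 𝒱.unit ⟶ T.obj K)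
    (A B : 𝒜.Obj) :
    T.map A B ≫ 𝒱.imap (T.map K A ≫ 𝒱.evAt ξ (T.obj A)) (𝟙 (T.obj B))
      = 𝒜.comp K A B ≫ 𝒱.imap (𝟙 _) (T.map K B ≫ 𝒱.evAt ξ (T.obj B)) := by
  rw [𝒱.imap_comp_left, ← 𝒱.L_comp_imap_evAt, Category.assoc, ← 𝒱.imap_comm,
    reassoc_of% (T.EF1 A K B), 𝒱.imap_comp_right]

def VCat.yonedaInv (K : 𝒜.Obj) (T : VFun 𝒜 𝒱.self) (ξ : 𝒱.unit ⟶ T.obj K) :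
    VNat (𝒜.repr K) T where
  app A := T.map K A ≫ 𝒱.evAt ξ (T.obj A)
  naturality := T.map_comp_evAt_naturality ξ

theorem VCat.id_comp_yonedaInv_app (K : 𝒜.Obj) (T : VFun 𝒜 𝒱.self) (ξ : 𝒱.unit ⟶ T.obj K) :
    𝒜.id K ≫ (𝒜.yonedaInv K T ξ).app K = ξ := by
  change 𝒜.id K ≫ T.map K K ≫ 𝒱.evAt ξ (T.obj K) = ξ
  rw [reassoc_of% (T.EF2 K), 𝒱.j_evAt]

end Yoneda

/-- **The external Yoneda lemma** (Street, "Skew-closed categories", Theorem in §4).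
Let `𝒱` be a left skew-closed category, `𝒜` a `𝒱`-category, `K` an object of `𝒜`,
and `T : 𝒜 ⟶ 𝒱` a `𝒱`-functor.  The assignment sending a `𝒱`-natural transformation
`θ : 𝒜(K,-) ⇒ T` to `θ_K ∘ j_K : I ⟶ TK` is a bijection onto `𝒱(I, TK)`; its inverse
sends `ξ : I ⟶ TK` to the family with components `i_{TA} ∘ [ξ,1] ∘ T_{K,A}`. -/
theorem external_yoneda {V : Type u} [Category.{v} V] (𝒱 : SkewClosedStruct V)
    (𝒜 : VCat.{v, u, u} V 𝒱) (K : 𝒜.Obj) (T : VFun 𝒜 𝒱.self) :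
    Function.Bijective (fun θ : VNat (𝒜.repr K) T => 𝒜.id K ≫ θ.app K) ∧
    ∀ (θ : VNat (𝒜.repr K) T) (A : 𝒜.Obj),
      θ.app A = T.map K A ≫ 𝒱.imap (𝒜.id K ≫ θ.app K) (𝟙 (T.obj A)) ≫ 𝒱.i (T.obj A) := by
  have injective : Function.Injective (fun θ : VNat (𝒜.repr K) T => 𝒜.id K ≫ θ.app K) :=
    fun θ θ' h => VNat.ext <| funext fun A => by
      rw [θ.app_eq_map_comp_evAt, θ'.app_eq_map_comp_evAt]
      exact congrArg (fun ξ => T.map K A ≫ 𝒱.evAt ξ (T.obj A)) h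
  have surjective : Function.Surjective (fun θ : VNat (𝒜.repr K) T => 𝒜.id K ≫ θ.app K) :=
    fun ξ => ⟨𝒜.yonedaInv K T ξ, 𝒜.id_comp_yonedaInv_app K T ξ⟩
  exact ⟨⟨injective, surjective⟩, VNat.app_eq_map_comp_evAt⟩
end

section
/- Let 𝒱 be a left skew-closed category, 𝒜 a 𝒱-category, K an object of 𝒜, and P a presheaf on 𝒜. Then the family of morphisms P_{K,A} : PK → [𝒜(A,K),PA] is a limit cone for the diagram defining the presheaf hom Â(yK,P): for every object X of 𝒱 and every family ξ_A : X → [𝒜(A,K),PA] satisfying [1,P_{A,B}] ∘ ξ_A = [L^B_{A,K},1] ∘ L^{𝒜(B,A)} ∘ ξ_B for all A,B, there is a unique morphism f : X → PK with P_{K,A} ∘ f = ξ_A for all A, given explicitly by f = i_{PK} ∘ [j_K,1] ∘ ξ_K. In particular Â(yK,P) exists and PK ≅ Â(yK,P). -/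
open CategoryTheory

universe v u w

/-- A presheaf (right module) on a `𝒱`-category `𝒜`. -/
structure VPresheaf {V : Type u} [Category.{v} V] {𝒱 : SkewClosedStruct V}
    (𝒜 : VCat.{v, u, w} V 𝒱) where
  obj : 𝒜.Obj → V
  map : ∀ A B, obj A ⟶ 𝒱.ihom (𝒜.Hom B A) (obj B)
  EP1 : ∀ A B C,
      map A B ≫ 𝒱.L (𝒜.Hom B C) (𝒜.Hom B A) (obj B) ≫
          𝒱.imap (𝒜.comp B C A) (𝟙 (𝒱.ihom (𝒜.Hom B C) (obj B)))
        = map A C ≫ 𝒱.imap (𝟙 (𝒜.Hom C A)) (map C B)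
  EP2 : ∀ A, map A A ≫ 𝒱.imap (𝒜.id A) (𝟙 (obj A)) ≫ 𝒱.i (obj A) = 𝟙 (obj A)

/-- The family `f` is a cone over the diagram whose limit is the presheaf hom
`Â(P,Q)`, where the presheaves `P` and `Q` are given by raw data
(object families `PO`, `QO` and structure maps `PM`, `QM`). -/
def IsPshCone {V : Type u} [Category.{v} V] (𝒱 : SkewClosedStruct V)
    (𝒜 : VCat.{v, u, w} V 𝒱)
    (PO : 𝒜.Obj → V) (PM : ∀ A B, PO A ⟶ 𝒱.ihom (𝒜.Hom B A) (PO B))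
    (QO : 𝒜.Obj → V) (QM : ∀ A B, QO A ⟶ 𝒱.ihom (𝒜.Hom B A) (QO B))
    (X : V) (f : ∀ A, X ⟶ 𝒱.ihom (PO A) (QO A)) : Prop :=
  ∀ A B,
    f A ≫ 𝒱.imap (𝟙 (PO A)) (QM A B)
      = f B ≫ 𝒱.L (𝒜.Hom B A) (PO B) (QO B) ≫
          𝒱.imap (PM A B) (𝟙 (𝒱.ihom (𝒜.Hom B A) (QO B)))

/-- **The strong Yoneda lemma** (Street, "Skew-closed categories", Theorem in §6).
For a presheaf `P` on `𝒜` and `K` an object of `𝒜`, the family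
`P_{K,A} : PK ⟶ [𝒜(A,K), PA]` is a limit cone for the diagram defining the presheaf hom
`Â(yK, P)`: it is a cone, and for any cone `ξ_A : X ⟶ [𝒜(A,K), PA]` a morphism
`f : X ⟶ PK` satisfies `P_{K,A} ∘ f = ξ_A` (for all `A`) iff
`f = i_{PK} ∘ [j_K,1] ∘ ξ_K`; in particular such an `f` exists and is unique,
so `Â(yK,P)` exists and `PK ≅ Â(yK,P)`. -/
theorem strong_yoneda {V : Type u} [Category.{v} V] (𝒱 : SkewClosedStruct V)
    (𝒜 : VCat.{v, u, w} V 𝒱) (K : 𝒜.Obj) (P : VPresheaf 𝒜) :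
    IsPshCone 𝒱 𝒜 (fun A => 𝒜.Hom A K) (fun A B => 𝒜.comp B A K) P.obj P.map
      (P.obj K) (fun A => P.map K A) ∧
    ∀ (X : V) (ξ : ∀ A, X ⟶ 𝒱.ihom (𝒜.Hom A K) (P.obj A)),
      IsPshCone 𝒱 𝒜 (fun A => 𝒜.Hom A K) (fun A B => 𝒜.comp B A K) P.obj P.map X ξ →
      ∀ f : X ⟶ P.obj K,
        (∀ A, f ≫ P.map K A = ξ A) ↔
          f = ξ K ≫ 𝒱.imap (𝒜.id K) (𝟙 (P.obj K)) ≫ 𝒱.i (P.obj K) := by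
  constructor
  · intro A B
    exact (P.EP1 K B A).symm
  · intro X ξ hξ f
    constructor
    · intro h
      have h' := congrArg
        (fun g => g ≫ 𝒱.imap (𝒜.id K) (𝟙 (P.obj K)) ≫ 𝒱.i (P.obj K)) (h K)
      simp only [Category.assoc] at h'
      rw [P.EP2 K, Category.comp_id] at h'
      exact h'
    · intro h A
      subst h
      have swap :
          𝒱.imap (𝒜.id K) (𝟙 (P.obj K)) ≫ 𝒱.imap (𝟙 𝒱.unit) (P.map K A)
            = 𝒱.imap (𝟙 (𝒜.Hom K K)) (P.map K A) ≫ 𝒱.imap (𝒜.id K)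
                (𝟙 (𝒱.ihom (𝒜.Hom A K) (P.obj A))) := by
        rw [← 𝒱.imap_comp, ← 𝒱.imap_comp]
        simp
      calc (ξ K ≫ 𝒱.imap (𝒜.id K) (𝟙 (P.obj K)) ≫ 𝒱.i (P.obj K)) ≫ P.map K A
          = ξ K ≫ 𝒱.imap (𝒜.id K) (𝟙 (P.obj K)) ≫ 𝒱.imap (𝟙 𝒱.unit) (P.map K A) ≫
              𝒱.i (𝒱.ihom (𝒜.Hom A K) (P.obj A)) := by
            simp only [Category.assoc]
            rw [𝒱.i_natural]
        _ = (ξ K ≫ 𝒱.imap (𝟙 (𝒜.Hom K K)) (P.map K A)) ≫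
              𝒱.imap (𝒜.id K) (𝟙 (𝒱.ihom (𝒜.Hom A K) (P.obj A))) ≫
              𝒱.i (𝒱.ihom (𝒜.Hom A K) (P.obj A)) := by
            simp only [Category.assoc]
            rw [← Category.assoc (𝒱.imap (𝒜.id K) (𝟙 (P.obj K))), swap,
              Category.assoc]
        _ = ξ A ≫ 𝒱.L (𝒜.Hom A K) (𝒜.Hom A K) (P.obj A) ≫
              𝒱.imap (𝒜.comp A K K) (𝟙 (𝒱.ihom (𝒜.Hom A K) (P.obj A))) ≫
              𝒱.imap (𝒜.id K) (𝟙 (𝒱.ihom (𝒜.Hom A K) (P.obj A))) ≫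
              𝒱.i (𝒱.ihom (𝒜.Hom A K) (P.obj A)) := by
            rw [hξ K A]
            simp only [Category.assoc]
        _ = ξ A ≫ 𝒱.L (𝒜.Hom A K) (𝒜.Hom A K) (P.obj A) ≫
              𝒱.imap (𝒱.j (𝒜.Hom A K)) (𝟙 (𝒱.ihom (𝒜.Hom A K) (P.obj A))) ≫
              𝒱.i (𝒱.ihom (𝒜.Hom A K) (P.obj A)) := by
            rw [← Category.assoc (𝒱.imap (𝒜.comp A K K) _), ← 𝒱.imap_comp,
              Category.comp_id, 𝒜.EC3 A K]
        _ = ξ A := by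
            rw [𝒱.SCC2 (𝒜.Hom A K) (P.obj A), Category.comp_id]
end

section
/- Let 𝒱 be a category with a functor [-,-] : 𝒱^op × 𝒱 → 𝒱 such that each functor [B,-] has a left adjoint -⊗B, with adjunction isomorphism π : 𝒱(A⊗B,C) ≅ 𝒱(A,[B,C]) natural in all variables; set e = π⁻¹(1_{[B,C]}) : [B,C]⊗B → C and d = π(1_{A⊗B}) : A → [B,A⊗B]. The following correspondences are bijective: natural a : (A⊗B)⊗C → A⊗(B⊗C) correspond to natural L : [A,C] → [[B,A],[B,C]] (via the natural p : [B⊗C,D] → [B,[C,D]] with 𝒱(1,p)∘π = (π∘π)∘𝒱(a,1), L = p∘[e,1], p = [d,1]∘L); natural ℓ : I⊗A → A correspond to natural j : I → [A,A] (j = [1,ℓ]∘d, ℓ = e∘(j⊗1)); and natural r : A → A⊗I correspond to natural i : [I,B] → B (𝒱(1,i)∘π = 𝒱(r,1)). Under these correspondences, the data ([-,-], I, i, j, L) form a left skew-closed structure on 𝒱 if and only if the corresponding data (⊗, I, r, ℓ, a) form a left skew-monoidal structure on 𝒱; consequently left skew-closed structures with the given hom functor are in bijection with left skew-monoidal structures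 with the given tensor. -/
/-!
Every axiom on either side is an equation between maps into an iterated internal hom, so it
can be tested after transposing across `π` once, twice or three times. The correspondences
turn each transposed skew-closed composite into a skew-monoidal composite followed by an
evaluation: for a suitable tensor-side composite `M` and closed-side composite `N` one has
`π (M ≫ k) = π k ≫ N` for every `k`. Taking `k = 1` (so `π k = d`) derives the skew-monoidal
axiom from the skew-closed one, and taking `k = e` (so `π k = 1`) gives the converse. For
(SCC1) the three-fold transpose is the pentagon followed by the evaluation of a composite;
the pentagon itself is recovered by precomposing with units `d` and using naturality of `a`
and the triangle identity `(d ⊗ 1) ≫ e = 1`. (SCC5) and (5) agree because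
`j_I ≫ i_I = r_I ≫ ℓ_I`.
-/

open CategoryTheory

universe v u w

/-- The data of a functor `𝒱ᵒᵖ × 𝒱 ⟶ 𝒱` (an internal-hom candidate). -/
structure HomData (C : Type u) [Category.{v} C] where
  obj : C → C → C
  map : ∀ {A A' B B' : C}, (A' ⟶ A) → (B ⟶ B') → (obj A B ⟶ obj A' B')
  map_id : ∀ (A B : C), map (𝟙 A) (𝟙 B) = 𝟙 (obj A B)
  map_comp : ∀ {A A' A'' B B' B'' : C} (f : A' ⟶ A) (f' : A'' ⟶ A') (g : B ⟶ B')
      (g' : B' ⟶ B''), map (f' ≫ f) (g ≫ g') = map f g ≫ map f' g'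

/-- The data of a functor `𝒱 × 𝒱 ⟶ 𝒱` (a tensor-product candidate). -/
structure TenData (C : Type u) [Category.{v} C] where
  obj : C → C → C
  map : ∀ {A A' B B' : C}, (A ⟶ A') → (B ⟶ B') → (obj A B ⟶ obj A' B')
  map_id : ∀ (A B : C), map (𝟙 A) (𝟙 B) = 𝟙 (obj A B)
  map_comp : ∀ {A A' A'' B B' B'' : C} (f : A ⟶ A') (f' : A' ⟶ A'') (g : B ⟶ B')
      (g' : B' ⟶ B''), map (f ≫ f') (g ≫ g') = map f g ≫ map f' g'

section Adjunction

variable {C : Type u} [Category.{v} C] (T : TenData C) (E : HomData C)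
variable (π : ∀ A B D : C, (T.obj A B ⟶ D) ≃ (A ⟶ E.obj B D))

/-- The counit (evaluation) `e = π⁻¹(1) : [B,D] ⊗ B ⟶ D` of the tensor-hom adjunction. -/
def adjE (B D : C) : T.obj (E.obj B D) B ⟶ D := (π (E.obj B D) B D).symm (𝟙 (E.obj B D))

/-- The unit `d = π(1) : A ⟶ [B, A ⊗ B]` of the tensor-hom adjunction. -/
def adjD (A B : C) : A ⟶ E.obj B (T.obj A B) := π A B (T.obj A B) (𝟙 (T.obj A B))

end Adjunction

namespace TenData

variable {C : Type u} [Category.{v} C] (T : TenData C)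

lemma map_id_comp {X A B D : C} (f : A ⟶ B) (g : B ⟶ D) :
    T.map (𝟙 X) (f ≫ g) = T.map (𝟙 X) f ≫ T.map (𝟙 X) g := by
  simpa using T.map_comp (𝟙 X) (𝟙 X) f g

lemma map_comp_id {X A B D : C} (f : A ⟶ B) (g : B ⟶ D) :
    T.map (f ≫ g) (𝟙 X) = T.map f (𝟙 X) ≫ T.map g (𝟙 X) := by
  simpa using T.map_comp f g (𝟙 X) (𝟙 X)

lemma map_comp_map_id {A A' B B' B'' : C} (f : A ⟶ A') (g : B ⟶ B') (g' : B' ⟶ B'') :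
    T.map f g ≫ T.map (𝟙 A') g' = T.map f (g ≫ g') := by
  simp [← T.map_comp]

lemma map_comp_map_of_comp_eq_left {A A' A'' A''' B B' : C} {f : A ⟶ A'} {x : A' ⟶ A'''}
    {y : A ⟶ A''} {f' : A'' ⟶ A'''} (h : f ≫ x = y ≫ f') (g : B ⟶ B') :
    T.map f g ≫ T.map x (𝟙 B') = T.map y (𝟙 B) ≫ T.map f' g := by
  rw [← T.map_comp, ← T.map_comp, h, Category.comp_id, Category.id_comp]

lemma map_comp_map_of_comp_eq_right {A A' B B' B'' B''' : C} {g : B ⟶ B'} {x : B' ⟶ B'''}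
    {y : B ⟶ B''} {g' : B'' ⟶ B'''} (f : A ⟶ A') (h : g ≫ x = y ≫ g') :
    T.map f g ≫ T.map (𝟙 A') x = T.map (𝟙 A) y ≫ T.map f g' := by
  rw [← T.map_comp, ← T.map_comp, h, Category.comp_id, Category.id_comp]

end TenData

namespace HomData

variable {C : Type u} [Category.{v} C] (E : HomData C)

lemma map_comp_id {X A B D : C} (f : A ⟶ B) (g : B ⟶ D) :
    E.map (f ≫ g) (𝟙 X) = E.map g (𝟙 X) ≫ E.map f (𝟙 X) := by
  simpa using E.map_comp g f (𝟙 X) (𝟙 X)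

lemma map_comp_id_comm {A A' B B' : C} (f : A' ⟶ A) (g : B ⟶ B') :
    E.map f (𝟙 B) ≫ E.map (𝟙 A') g = E.map (𝟙 A) g ≫ E.map f (𝟙 B') := by
  simp [← E.map_comp]

end HomData

namespace TensorHom

section Transpose

variable {C : Type u} [Category.{v} C] {T : TenData C} {E : HomData C}
  {π : ∀ A B D : C, (T.obj A B ⟶ D) ≃ (A ⟶ E.obj B D)}

lemma homEquiv_adjE (B D : C) : π (E.obj B D) B D (adjE T E π B D) = 𝟙 (E.obj B D) :=
  (π _ _ _).apply_symm_apply _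

variable (hπ : ∀ {A A' B B' D D' : C} (f : A' ⟶ A) (g : B' ⟶ B) (h : D ⟶ D')
    (k : T.obj A B ⟶ D), π A' B' D' (T.map f g ≫ k ≫ h) = f ≫ π A B D k ≫ E.map g h)
include hπ

lemma homEquiv_map_left {A A' B D : C} (f : A' ⟶ A) (k : T.obj A B ⟶ D) :
    π A' B D (T.map f (𝟙 B) ≫ k) = f ≫ π A B D k := by
  simpa [E.map_id] using hπ f (𝟙 B) (𝟙 D) k

lemma homEquiv_map_right {A B B' D : C} (g : B' ⟶ B) (k : T.obj A B ⟶ D) :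
    π A B' D (T.map (𝟙 A) g ≫ k) = π A B D k ≫ E.map g (𝟙 D) := by
  simpa using hπ (𝟙 A) g (𝟙 D) k

lemma homEquiv_comp {A B D D' : C} (k : T.obj A B ⟶ D) (h : D ⟶ D') :
    π A B D' (k ≫ h) = π A B D k ≫ E.map (𝟙 B) h := by
  simpa [T.map_id] using hπ (𝟙 A) (𝟙 B) h k

lemma homEquiv_symm_eq {A B D : C} (x : A ⟶ E.obj B D) :
    (π A B D).symm x = T.map x (𝟙 B) ≫ adjE T E π B D := by
  apply (π A B D).injective
  rw [Equiv.apply_symm_apply, homEquiv_map_left hπ, homEquiv_adjE, Category.comp_id]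

lemma map_homEquiv_adjE {A B D : C} (k : T.obj A B ⟶ D) :
    T.map (π A B D k) (𝟙 B) ≫ adjE T E π B D = k := by
  rw [← homEquiv_symm_eq hπ, Equiv.symm_apply_apply]

lemma map_adjD_adjE (A B : C) :
    T.map (adjD T E π A B) (𝟙 B) ≫ adjE T E π B (T.obj A B) = 𝟙 (T.obj A B) :=
  map_homEquiv_adjE hπ _

end Transpose

def compEval {C : Type u} [Category.{v} C] (T : TenData C) (E : HomData C)
    (π : ∀ A B D : C, (T.obj A B ⟶ D) ≃ (A ⟶ E.obj B D)) (A B D : C) :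
    T.obj (E.obj B D) (T.obj (E.obj A B) A) ⟶ D :=
  T.map (𝟙 _) (adjE T E π A B) ≫ adjE T E π B D

section Correspondence

variable {C : Type u} [Category.{v} C] {T : TenData C} {E : HomData C} {I : C}
  {π : ∀ A B D : C, (T.obj A B ⟶ D) ≃ (A ⟶ E.obj B D)}
  (hπ : ∀ {A A' B B' D D' : C} (f : A' ⟶ A) (g : B' ⟶ B) (h : D ⟶ D')
    (k : T.obj A B ⟶ D), π A' B' D' (T.map f g ≫ k ≫ h) = f ≫ π A B D k ≫ E.map g h)
  {a : ∀ A B C' : C, T.obj (T.obj A B) C' ⟶ T.obj A (T.obj B C')}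
  (ha : ∀ {A A' B B' C₁ C₁' : C} (f : A ⟶ A') (g : B ⟶ B') (h : C₁ ⟶ C₁'),
    T.map (T.map f g) h ≫ a A' B' C₁' = a A B C₁ ≫ T.map f (T.map g h))
  {l : ∀ A : C, T.obj I A ⟶ A}
  (hl : ∀ {A B : C} (f : A ⟶ B), T.map (𝟙 I) f ≫ l B = l A ≫ f)
  {r : ∀ A : C, A ⟶ T.obj A I}
  {p : ∀ B C' D : C, E.obj (T.obj B C') D ⟶ E.obj B (E.obj C' D)}
  (hp : ∀ {B B' C₁ C₁' D D' : C} (f : B' ⟶ B) (g : C₁' ⟶ C₁) (h : D ⟶ D'),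
    E.map (T.map f g) h ≫ p B' C₁' D' = p B C₁ D ≫ E.map f (E.map g h))
  {L : ∀ X Y Z : C, E.obj Y Z ⟶ E.obj (E.obj X Y) (E.obj X Z)}
  {j : ∀ A : C, I ⟶ E.obj A A} {i : ∀ B : C, E.obj I B ⟶ B}
  (hap : ∀ (A B C' D : C) (k : T.obj A (T.obj B C') ⟶ D),
    π A B (E.obj C' D) (π (T.obj A B) C' D (a A B C' ≫ k)) = π A (T.obj B C') D k ≫ p B C' D)
  (hLp : ∀ X Y Z : C, L X Y Z = E.map (adjE T E π X Y) (𝟙 Z) ≫ p (E.obj X Y) X Z)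
  (hjl : ∀ A : C, j A = adjD T E π I A ≫ E.map (𝟙 A) (l A))
  (hri : ∀ (A B : C) (k : T.obj A I ⟶ B), π A I B k ≫ i B = r A ≫ k)

include hπ hap hLp in
lemma homEquiv_comp_L {Q X Y Z : C} (k : T.obj Q Y ⟶ Z) :
    π Q Y Z k ≫ L X Y Z
      = π _ _ _ (π _ _ _ (a Q (E.obj X Y) X ≫ T.map (𝟙 Q) (adjE T E π X Y) ≫ k)) := by
  rw [hap, homEquiv_map_right hπ, hLp, Category.assoc]

include hπ hp hLp in
lemma p_eq_L_comp (A B D : C) :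
    p A B D = L B (T.obj A B) D ≫ E.map (adjD T E π A B) (𝟙 (E.obj B D)) := by
  have hp_adjD := hp (adjD T E π A B) (𝟙 B) (𝟙 D)
  rw [E.map_id] at hp_adjD
  rw [hLp, Category.assoc, ← hp_adjD, ← Category.assoc, ← HomData.map_comp_id,
    map_adjD_adjE hπ, E.map_id, Category.id_comp]

include hπ hjl in
lemma j_eq_homEquiv (A : C) : j A = π I A A (l A) := by
  rw [hjl, adjD, ← homEquiv_comp hπ, Category.id_comp]

include hπ hl hjl in
lemma j_natural {A B : C} (f : A ⟶ B) : j A ≫ E.map (𝟙 A) f = j B ≫ E.map f (𝟙 B) := by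
  rw [j_eq_homEquiv hπ hjl, j_eq_homEquiv hπ hjl, ← homEquiv_comp hπ,
    ← homEquiv_map_right hπ, hl f]

include hri in
lemma r_eq_adjD_comp (A : C) : r A = adjD T E π A I ≫ i (T.obj A I) := by
  rw [adjD, hri, Category.comp_id]

include hri in
lemma i_eq_r_comp (B : C) : i B = r (E.obj I B) ≫ adjE T E π I B := by
  simpa [homEquiv_adjE] using hri (E.obj I B) B (adjE T E π I B)

include hπ hjl hri in
lemma j_comp_i_eq_r_comp_l : j I ≫ i I = r I ≫ l I := by
  rw [j_eq_homEquiv hπ hjl, hri]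

include hπ hap hri in
lemma homEquiv_r_comp_a {A B D : C} (k : T.obj A (T.obj B I) ⟶ D) :
    π A B D (r (T.obj A B) ≫ a A B I ≫ k)
      = π A (T.obj B I) D k ≫ p B I D ≫ E.map (𝟙 B) (i D) := by
  rw [← hri, homEquiv_comp hπ, hap, Category.assoc]

include hπ hap hri in
lemma r_comp_a_iff :
    (∀ A B : C, r (T.obj A B) ≫ a A B I = T.map (𝟙 A) (r B)) ↔
      ∀ B D : C, p B I D ≫ E.map (𝟙 B) (i D) = E.map (r B) (𝟙 D) := by
  constructor
  · intro h B D
    calc p B I D ≫ E.map (𝟙 B) (i D)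
        = π _ _ _ (adjE T E π (T.obj B I) D) ≫ p B I D ≫ E.map (𝟙 B) (i D) := by
          rw [homEquiv_adjE, Category.id_comp]
      _ = π _ _ _ (r _ ≫ a _ B I ≫ adjE T E π (T.obj B I) D) :=
          (homEquiv_r_comp_a hπ hap hri _).symm
      _ = E.map (r B) (𝟙 D) := by
          rw [reassoc_of% (h _ B), homEquiv_map_right hπ, homEquiv_adjE, Category.id_comp]
  · intro h A B
    apply (π A B _).injective
    calc π A B _ (r (T.obj A B) ≫ a A B I)
        = π _ _ _ (r (T.obj A B) ≫ a A B I ≫ 𝟙 _) := by rw [Category.comp_id]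
      _ = π _ _ _ (T.map (𝟙 A) (r B) ≫ 𝟙 _) := by
          rw [homEquiv_r_comp_a hπ hap hri, h, homEquiv_map_right hπ]
      _ = π A B _ (T.map (𝟙 A) (r B)) := by rw [Category.comp_id]

include hπ hp hLp hri in
lemma L_comp_i_iff :
    (∀ B C' : C, L I B C' ≫ E.map (𝟙 (E.obj I B)) (i C') = E.map (i B) (𝟙 C')) ↔
      ∀ B D : C, p B I D ≫ E.map (𝟙 B) (i D) = E.map (r B) (𝟙 D) := by
  constructor
  · intro h B D
    rw [p_eq_L_comp hπ hp hLp, Category.assoc, HomData.map_comp_id_comm, reassoc_of% (h _ D),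
      ← HomData.map_comp_id, ← r_eq_adjD_comp hri]
  · intro h B C'
    rw [hLp, Category.assoc, h, ← HomData.map_comp_id, ← i_eq_r_comp hri]

include hπ hap hjl in
lemma homEquiv_homEquiv_a_comp_l {A B D : C} (k : T.obj A B ⟶ D) :
    π _ _ _ (π _ _ _ (a I A B ≫ l (T.obj A B) ≫ k))
      = j (T.obj A B) ≫ E.map (𝟙 _) k ≫ p A B D := by
  rw [hap, homEquiv_comp hπ, j_eq_homEquiv hπ hjl, Category.assoc]

include hπ hjl in
lemma homEquiv_homEquiv_map_l {A B D : C} (k : T.obj A B ⟶ D) :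
    π _ _ _ (π _ _ _ (T.map (l A) (𝟙 B) ≫ k)) = j A ≫ E.map (𝟙 A) (π A B D k) := by
  rw [homEquiv_map_left hπ, homEquiv_comp hπ, j_eq_homEquiv hπ hjl]

include hπ hl hp hap hLp hjl in
lemma j_comp_L_iff :
    (∀ A B : C, j B ≫ L A B B = j (E.obj A B)) ↔
      ∀ A B : C, a I A B ≫ l (T.obj A B) = T.map (l A) (𝟙 B) := by
  constructor
  · intro h A B
    apply (π _ B _).injective
    apply (π I A _).injective
    rw [← Category.comp_id (a I A B ≫ l _), Category.assoc,
      homEquiv_homEquiv_a_comp_l hπ hap hjl,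
      ← Category.comp_id (T.map (l A) (𝟙 B)), homEquiv_homEquiv_map_l hπ hjl, E.map_id,
      Category.id_comp, p_eq_L_comp hπ hp hLp, reassoc_of% (h B (T.obj A B)),
      j_natural hπ hl hjl, adjD]
  · intro h A B
    rw [j_eq_homEquiv hπ hjl B, homEquiv_comp_L hπ hap hLp, hl,
      reassoc_of% (h (E.obj A B) A), homEquiv_homEquiv_map_l hπ hjl, homEquiv_adjE,
      E.map_id, Category.comp_id]

include hπ hp hLp hjl in
lemma map_l_comp_p {B D : C} :
    E.map (l B) (𝟙 D) ≫ p I B D = L B B D ≫ E.map (j B) (𝟙 (E.obj B D)) := by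
  have hp_j := hp (j B) (𝟙 B) (𝟙 D)
  rw [E.map_id] at hp_j
  rw [← Equiv.symm_apply_apply (π I B B) (l B), ← j_eq_homEquiv hπ hjl, homEquiv_symm_eq hπ,
    HomData.map_comp_id, Category.assoc, hp_j, ← Category.assoc, ← hLp]

include hπ hp hap hLp hjl hri in
lemma homEquiv_map_r_comp_a_comp_map_l {X B D : C} (k : T.obj X B ⟶ D) :
    π X B D (T.map (r X) (𝟙 B) ≫ a X I B ≫ T.map (𝟙 X) (l B) ≫ k)
      = π X B D k ≫ L B B D ≫ E.map (j B) (𝟙 (E.obj B D)) ≫ i (E.obj B D) := by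
  rw [homEquiv_map_left hπ, ← hri, hap, homEquiv_map_right hπ]
  simp only [Category.assoc]
  rw [reassoc_of% (map_l_comp_p hπ hp hLp hjl)]

include hπ hp hap hLp hjl hri in
lemma L_comp_j_comp_i_iff :
    (∀ A C' : C,
        L A A C' ≫ E.map (j A) (𝟙 (E.obj A C')) ≫ i (E.obj A C') = 𝟙 (E.obj A C')) ↔
      ∀ A B : C, T.map (r A) (𝟙 B) ≫ a A I B ≫ T.map (𝟙 A) (l B) = 𝟙 (T.obj A B) := by
  constructor
  · intro h A B
    apply (π A B _).injective
    rw [← Category.comp_id (T.map (𝟙 A) (l B)),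
      homEquiv_map_r_comp_a_comp_map_l hπ hp hap hLp hjl hri,
      h, Category.comp_id]
  · intro h A C'
    calc L A A C' ≫ E.map (j A) (𝟙 (E.obj A C')) ≫ i (E.obj A C')
        = π _ _ _ (adjE T E π A C') ≫ L A A C' ≫ E.map (j A) (𝟙 _) ≫ i (E.obj A C') := by
          rw [homEquiv_adjE, Category.id_comp]
      _ = 𝟙 (E.obj A C') := by
          rw [← homEquiv_map_r_comp_a_comp_map_l hπ hp hap hLp hjl hri, reassoc_of% (h _ A),
            homEquiv_adjE]

include hπ hap hLp in
lemma L_eq_homEquiv (X Y Z : C) :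
    L X Y Z = π _ _ _ (π _ _ _ (a (E.obj Y Z) (E.obj X Y) X ≫ compEval T E π X Y Z)) := by
  rw [compEval, ← homEquiv_comp_L hπ hap hLp, homEquiv_adjE, Category.id_comp]

include hπ ha hap hLp in
lemma L_comp_L_comp_map_L_eq (A B C' D : C) :
    L A C' D ≫ L (E.obj A B) (E.obj A C') (E.obj A D) ≫ E.map (L A B C') (𝟙 _)
      = π _ _ _ (π _ _ _ (π _ _ _ (T.map (a (E.obj C' D) (E.obj B C') (E.obj A B)) (𝟙 A)
          ≫ a (E.obj C' D) (T.obj (E.obj B C') (E.obj A B)) A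
          ≫ T.map (𝟙 (E.obj C' D)) (a (E.obj B C') (E.obj A B) A)
          ≫ T.map (𝟙 _) (compEval T E π A B C') ≫ adjE T E π C' D))) := by
  rw [L_eq_homEquiv hπ hap hLp A C' D, ← Category.assoc, homEquiv_comp_L hπ hap hLp,
    ← homEquiv_map_right hπ, ← homEquiv_map_left hπ, ← homEquiv_map_left hπ,
    ← homEquiv_map_left hπ, ← homEquiv_map_left hπ]
  congr 3
  have hL : T.map (L A B C') (𝟙 (E.obj A B)) ≫ adjE T E π (E.obj A B) (E.obj A C')
      = π _ _ _ (a (E.obj B C') (E.obj A B) A ≫ compEval T E π A B C') := by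
    rw [← homEquiv_symm_eq hπ, L_eq_homEquiv hπ hap hLp, Equiv.symm_apply_apply]
  rw [← reassoc_of% (TenData.map_comp_id T), ha, TenData.map_comp_id T, Category.assoc,
    ← reassoc_of% (TenData.map_comp_id T (T.map (𝟙 _) (T.map (L A B C') (𝟙 _)))),
    ← TenData.map_id_comp T (T.map (L A B C') (𝟙 _)), hL, reassoc_of% (ha (𝟙 _) _ (𝟙 A)),
    compEval, compEval,
    ← reassoc_of% (TenData.map_id_comp T (T.map (π _ _ _ _) (𝟙 A))), map_homEquiv_adjE hπ,
    TenData.map_id_comp T (a _ _ A)]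
  simp only [Category.assoc]

include hπ ha hap hLp in
lemma L_comp_map_L_eq (A B C' D : C) :
    L B C' D ≫ E.map (𝟙 _) (L A B D)
      = π _ _ _ (π _ _ _ (π _ _ _ (a (T.obj (E.obj C' D) (E.obj B C')) (E.obj A B) A
          ≫ a (E.obj C' D) (E.obj B C') (T.obj (E.obj A B) A)
          ≫ T.map (𝟙 _) (compEval T E π A B C') ≫ adjE T E π C' D))) := by
  rw [L_eq_homEquiv hπ hap hLp B C' D, ← homEquiv_comp hπ, homEquiv_comp_L hπ hap hLp]
  congr 3
  have ha_adjE := ha (𝟙 (E.obj C' D)) (𝟙 (E.obj B C')) (adjE T E π A B)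
  rw [T.map_id] at ha_adjE
  rw [reassoc_of% ha_adjE, compEval, compEval, TenData.map_id_comp, Category.assoc]

include ha in
lemma map_comp_pentagon_left {X X' Y Y' Z Z' W W' : C} (f : X ⟶ X') (g : Y ⟶ Y') (h : Z ⟶ Z')
    (k : W ⟶ W') :
    T.map (T.map (T.map f g) h) k ≫ T.map (a X' Y' Z') (𝟙 W') ≫ a X' (T.obj Y' Z') W'
        ≫ T.map (𝟙 X') (a Y' Z' W')
      = T.map (a X Y Z) (𝟙 W) ≫ a X (T.obj Y Z) W ≫ T.map (𝟙 X) (a Y Z W)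
        ≫ T.map f (T.map g (T.map h k)) := by
  rw [reassoc_of% (T.map_comp_map_of_comp_eq_left (ha f g h) k), reassoc_of% (ha f (T.map g h) k),
    T.map_comp_map_of_comp_eq_right f (ha g h k)]

include ha in
lemma map_comp_pentagon_right {X X' Y Y' Z Z' W W' : C} (f : X ⟶ X') (g : Y ⟶ Y') (h : Z ⟶ Z')
    (k : W ⟶ W') :
    T.map (T.map (T.map f g) h) k ≫ a (T.obj X' Y') Z' W' ≫ a X' Y' (T.obj Z' W')
      = a (T.obj X Y) Z W ≫ a X Y (T.obj Z W) ≫ T.map f (T.map g (T.map h k)) := by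
  rw [reassoc_of% (ha (T.map f g) h k), ha f g (T.map h k)]

include hπ in
lemma map_adjD_comp_compEval (B C' D : C) :
    T.map (adjD T E π B (T.obj C' D)) (T.map (adjD T E π C' D) (𝟙 D))
      ≫ compEval T E π D (T.obj C' D) (T.obj B (T.obj C' D)) = 𝟙 _ := by
  rw [compEval, ← Category.assoc, T.map_comp_map_id, map_adjD_adjE hπ, map_adjD_adjE hπ]

include hπ ha hap hLp in
lemma L_comp_L_iff :
    (∀ A B C' D : C, L A C' D ≫ L (E.obj A B) (E.obj A C') (E.obj A D)
        ≫ E.map (L A B C') (𝟙 (E.obj (E.obj A B) (E.obj A D)))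
          = L B C' D ≫ E.map (𝟙 (E.obj B C')) (L A B D)) ↔
      ∀ A B C' D : C,
        T.map (a A B C') (𝟙 D) ≫ a A (T.obj B C') D ≫ T.map (𝟙 A) (a B C' D)
          = a (T.obj A B) C' D ≫ a A B (T.obj C' D) := by
  constructor
  · intro h X B C' D
    -- (SCC1) at these objects, precomposed with units `d`, is the pentagon at `X, B, C', D`.
    have key := h D (T.obj C' D) (T.obj B (T.obj C' D)) (T.obj X (T.obj B (T.obj C' D)))
    rw [L_comp_L_comp_map_L_eq hπ ha hap hLp, L_comp_map_L_eq hπ ha hap hLp] at key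
    simp only [EmbeddingLike.apply_eq_iff_eq] at key
    have collapse : T.map (adjD T E π X _)
        (T.map (adjD T E π B (T.obj C' D)) (T.map (adjD T E π C' D) (𝟙 D)))
          ≫ T.map (𝟙 _) (compEval T E π D (T.obj C' D) (T.obj B (T.obj C' D)))
          ≫ adjE T E π _ _ = 𝟙 _ := by
      rw [reassoc_of% T.map_comp_map_id, map_adjD_comp_compEval hπ, map_adjD_adjE hπ]
    rw [← Category.comp_id (a (T.obj X B) C' D ≫ a X B (T.obj C' D)), ← collapse,
      Category.assoc, ← reassoc_of% (map_comp_pentagon_right ha _ _ _ (𝟙 D)), ← key,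
      reassoc_of% (map_comp_pentagon_left ha), collapse, Category.comp_id]
  · intro h A B C' D
    rw [L_comp_L_comp_map_L_eq hπ ha hap hLp, L_comp_map_L_eq hπ ha hap hLp,
      reassoc_of% (h _ _ _ A)]

end Correspondence

end TensorHom

open TensorHom

theorem skew_closed_iff_skew_monoidal_general {C : Type u} [Category.{v} C]
    (T : TenData C) (E : HomData C) (I : C)
    (π : ∀ A B D : C, (T.obj A B ⟶ D) ≃ (A ⟶ E.obj B D))
    (hπ : ∀ {A A' B B' D D' : C} (f : A' ⟶ A) (g : B' ⟶ B) (h : D ⟶ D')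
        (k : T.obj A B ⟶ D),
      π A' B' D' (T.map f g ≫ k ≫ h) = f ≫ π A B D k ≫ E.map g h)
    -- the tensor-side data, natural in all variables
    (a : ∀ A B C' : C, T.obj (T.obj A B) C' ⟶ T.obj A (T.obj B C'))
    (ha : ∀ {A A' B B' C₁ C₁' : C} (f : A ⟶ A') (g : B ⟶ B') (h : C₁ ⟶ C₁'),
      T.map (T.map f g) h ≫ a A' B' C₁' = a A B C₁ ≫ T.map f (T.map g h))
    (l : ∀ A : C, T.obj I A ⟶ A)
    (hl : ∀ {A B : C} (f : A ⟶ B), T.map (𝟙 I) f ≫ l B = l A ≫ f)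
    (r : ∀ A : C, A ⟶ T.obj A I)
    -- the closed-side data, natural in all variables
    (p : ∀ B C' D : C, E.obj (T.obj B C') D ⟶ E.obj B (E.obj C' D))
    (hp : ∀ {B B' C₁ C₁' D D' : C} (f : B' ⟶ B) (g : C₁' ⟶ C₁) (h : D ⟶ D'),
      E.map (T.map f g) h ≫ p B' C₁' D' = p B C₁ D ≫ E.map f (E.map g h))
    (L : ∀ X Y Z : C, E.obj Y Z ⟶ E.obj (E.obj X Y) (E.obj X Z))
    (j : ∀ A : C, I ⟶ E.obj A A)
    (i : ∀ B : C, E.obj I B ⟶ B)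
    -- the two families of data correspond to each other under the bijections of §7:
    (hap : ∀ (A B C' D : C) (k : T.obj A (T.obj B C') ⟶ D),
      π A B (E.obj C' D) (π (T.obj A B) C' D (a A B C' ≫ k))
        = π A (T.obj B C') D k ≫ p B C' D)
    (hLp : ∀ X Y Z : C, L X Y Z = E.map (adjE T E π X Y) (𝟙 Z) ≫ p (E.obj X Y) X Z)
    (hjl : ∀ A : C, j A = adjD T E π I A ≫ E.map (𝟙 A) (l A))
    (hri : ∀ (A B : C) (k : T.obj A I ⟶ B), π A I B k ≫ i B = r A ≫ k) :
    -- conclusion: the skew-closed axioms hold iff the skew-monoidal axioms hold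
    ((∀ A B C' D : C,
        L A C' D ≫ L (E.obj A B) (E.obj A C') (E.obj A D) ≫
            E.map (L A B C') (𝟙 (E.obj (E.obj A B) (E.obj A D)))
          = L B C' D ≫ E.map (𝟙 (E.obj B C')) (L A B D)) ∧
      (∀ A C' : C, L A A C' ≫ E.map (j A) (𝟙 (E.obj A C')) ≫ i (E.obj A C')
          = 𝟙 (E.obj A C')) ∧
      (∀ A B : C, j B ≫ L A B B = j (E.obj A B)) ∧
      (∀ B C' : C, L I B C' ≫ E.map (𝟙 (E.obj I B)) (i C') = E.map (i B) (𝟙 C')) ∧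
      (j I ≫ i I = 𝟙 I))
    ↔
    ((∀ A B C' D : C,
        T.map (a A B C') (𝟙 D) ≫ a A (T.obj B C') D ≫ T.map (𝟙 A) (a B C' D)
          = a (T.obj A B) C' D ≫ a A B (T.obj C' D)) ∧
      (∀ A B : C, T.map (r A) (𝟙 B) ≫ a A I B ≫ T.map (𝟙 A) (l B) = 𝟙 (T.obj A B)) ∧
      (∀ A B : C, a I A B ≫ l (T.obj A B) = T.map (l A) (𝟙 B)) ∧
      (∀ A B : C, r (T.obj A B) ≫ a A B I = T.map (𝟙 A) (r B)) ∧
      (r I ≫ l I = 𝟙 I)) := by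
  refine and_congr (L_comp_L_iff hπ ha hap hLp) <|
    and_congr (L_comp_j_comp_i_iff hπ hp hap hLp hjl hri) <|
    and_congr (j_comp_L_iff hπ hl hp hap hLp hjl) <|
    and_congr ((L_comp_i_iff hπ hp hLp hri).trans (r_comp_a_iff hπ hap hri).symm) ?_
  rw [j_comp_i_eq_r_comp_l hπ hjl hri]

/-- (Street, "Skew-closed categories", Proposition 7.1: *monoidal skew-closed equals
closed skew-monoidal*.)
Suppose `𝒱` is a category with a hom functor `[-,-]` such that each `[B,-]` has a left
adjoint `-⊗B`, via a natural isomorphism `π : 𝒱(A⊗B,C) ≅ 𝒱(A,[B,C])`.  Given data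
`(a, ℓ, r)` on the tensor side and `(L, j, i)` (together with `p`) on the closed side
which correspond under the bijections of §7 — namely `𝒱(1,p)∘π = (π∘π)∘𝒱(a,1)`,
`L = p∘[e,1]`, `j = [1,ℓ]∘d` and `𝒱(1,i)∘π = 𝒱(r,1)` — the data `([-,-], I, i, j, L)`
form a left skew-closed structure iff the data `(⊗, I, r, ℓ, a)` form a left
skew-monoidal structure.  Hence left skew-closed structures with the given hom functor
are in bijection with left skew-monoidal structures with the given tensor. -/
theorem skew_closed_iff_skew_monoidal {C : Type u} [Category.{v} C]
    (T : TenData C) (E : HomData C) (I : C)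
    (π : ∀ A B D : C, (T.obj A B ⟶ D) ≃ (A ⟶ E.obj B D))
    (hπ : ∀ {A A' B B' D D' : C} (f : A' ⟶ A) (g : B' ⟶ B) (h : D ⟶ D')
        (k : T.obj A B ⟶ D),
      π A' B' D' (T.map f g ≫ k ≫ h) = f ≫ π A B D k ≫ E.map g h)
    -- the tensor-side data, natural in all variables
    (a : ∀ A B C' : C, T.obj (T.obj A B) C' ⟶ T.obj A (T.obj B C'))
    (ha : ∀ {A A' B B' C₁ C₁' : C} (f : A ⟶ A') (g : B ⟶ B') (h : C₁ ⟶ C₁'),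
      T.map (T.map f g) h ≫ a A' B' C₁' = a A B C₁ ≫ T.map f (T.map g h))
    (l : ∀ A : C, T.obj I A ⟶ A)
    (hl : ∀ {A B : C} (f : A ⟶ B), T.map (𝟙 I) f ≫ l B = l A ≫ f)
    (r : ∀ A : C, A ⟶ T.obj A I)
    (hr : ∀ {A B : C} (f : A ⟶ B), f ≫ r B = r A ≫ T.map f (𝟙 I))
    -- the closed-side data, natural in all variables
    (p : ∀ B C' D : C, E.obj (T.obj B C') D ⟶ E.obj B (E.obj C' D))
    (hp : ∀ {B B' C₁ C₁' D D' : C} (f : B' ⟶ B) (g : C₁' ⟶ C₁) (h : D ⟶ D'),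
      E.map (T.map f g) h ≫ p B' C₁' D' = p B C₁ D ≫ E.map f (E.map g h))
    (L : ∀ X Y Z : C, E.obj Y Z ⟶ E.obj (E.obj X Y) (E.obj X Z))
    (hL : ∀ (X : C) {Y Y' Z Z' : C} (f : Y' ⟶ Y) (g : Z ⟶ Z'),
      E.map f g ≫ L X Y' Z' = L X Y Z ≫ E.map (E.map (𝟙 X) f) (E.map (𝟙 X) g))
    (j : ∀ A : C, I ⟶ E.obj A A)
    (i : ∀ B : C, E.obj I B ⟶ B)
    (hi_nat : ∀ {A B : C} (f : A ⟶ B), E.map (𝟙 I) f ≫ i B = i A ≫ f)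
    -- the two families of data correspond to each other under the bijections of §7:
    (hap : ∀ (A B C' D : C) (k : T.obj A (T.obj B C') ⟶ D),
      π A B (E.obj C' D) (π (T.obj A B) C' D (a A B C' ≫ k))
        = π A (T.obj B C') D k ≫ p B C' D)
    (hLp : ∀ X Y Z : C, L X Y Z = E.map (adjE T E π X Y) (𝟙 Z) ≫ p (E.obj X Y) X Z)
    (hjl : ∀ A : C, j A = adjD T E π I A ≫ E.map (𝟙 A) (l A))
    (hri : ∀ (A B : C) (k : T.obj A I ⟶ B), π A I B k ≫ i B = r A ≫ k) :
    -- conclusion: the skew-closed axioms hold iff the skew-monoidal axioms hold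
    ((∀ A B C' D : C,
        L A C' D ≫ L (E.obj A B) (E.obj A C') (E.obj A D) ≫
            E.map (L A B C') (𝟙 (E.obj (E.obj A B) (E.obj A D)))
          = L B C' D ≫ E.map (𝟙 (E.obj B C')) (L A B D)) ∧
      (∀ A C' : C, L A A C' ≫ E.map (j A) (𝟙 (E.obj A C')) ≫ i (E.obj A C')
          = 𝟙 (E.obj A C')) ∧
      (∀ A B : C, j B ≫ L A B B = j (E.obj A B)) ∧
      (∀ B C' : C, L I B C' ≫ E.map (𝟙 (E.obj I B)) (i C') = E.map (i B) (𝟙 C')) ∧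
      (j I ≫ i I = 𝟙 I))
    ↔
    ((∀ A B C' D : C,
        T.map (a A B C') (𝟙 D) ≫ a A (T.obj B C') D ≫ T.map (𝟙 A) (a B C' D)
          = a (T.obj A B) C' D ≫ a A B (T.obj C' D)) ∧
      (∀ A B : C, T.map (r A) (𝟙 B) ≫ a A I B ≫ T.map (𝟙 A) (l B) = 𝟙 (T.obj A B)) ∧
      (∀ A B : C, a I A B ≫ l (T.obj A B) = T.map (l A) (𝟙 B)) ∧
      (∀ A B : C, r (T.obj A B) ≫ a A B I = T.map (𝟙 A) (r B)) ∧
      (r I ≫ l I = 𝟙 I)) :=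
  skew_closed_iff_skew_monoidal_general T E I π hπ a ha l hl r p hp L j i hap hLp hjl hri
end

section
/- Let 𝒱 be a left skew-closed category, 𝒜 a 𝒱-category, A and B objects of 𝒜, and f : I → 𝒜(A,B) a morphism in 𝒱. Then the family of morphisms 𝒜(f,C) = i ∘ [f,1] ∘ L^A_{B,C} : 𝒜(B,C) → 𝒜(A,C) is a 𝒱-natural transformation 𝒜(B,-) ⇒ 𝒜(A,-) between the representable 𝒱-functors. -/
/-!
Writing `ev_f = i ∘ [f,1] : [X,Y] → Y` for evaluation at a global element `f : I → X`, the
components are `𝒜(f,C) = ev_f ∘ L^A_{B,C}`. Extranaturality of `L` in `A` together with (SCC4)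
shows that `ev_f` is compatible with `L`, namely `[1,ev_f] ∘ L^X_{Y,Z} = [ev_f,1]`; with this,
the naturality square becomes the associativity axiom (EC1) followed by `[1,ev_f]`.
-/

open CategoryTheory

universe v u w

namespace SkewClosedStruct

variable {V : Type u} [Category.{v} V] (𝒱 : SkewClosedStruct V)

lemma imap_comp_left_s7 {X X' X'' Y : V} (u : X'' ⟶ X') (w : X' ⟶ X) :
    𝒱.imap (u ≫ w) (𝟙 Y) = 𝒱.imap w (𝟙 Y) ≫ 𝒱.imap u (𝟙 Y) := by
  rw [← 𝒱.imap_comp, Category.id_comp]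

lemma imap_comp_right_s7 {X Y Y' Y'' : V} (u : Y ⟶ Y') (w : Y' ⟶ Y'') :
    𝒱.imap (𝟙 X) (u ≫ w) = 𝒱.imap (𝟙 X) u ≫ 𝒱.imap (𝟙 X) w := by
  rw [← 𝒱.imap_comp, Category.comp_id]

lemma imap_left_comm_right {X X' Y Y' : V} (g : X' ⟶ X) (h : Y ⟶ Y') :
    𝒱.imap g (𝟙 Y) ≫ 𝒱.imap (𝟙 X') h = 𝒱.imap (𝟙 X) h ≫ 𝒱.imap g (𝟙 Y') := by
  rw [← 𝒱.imap_comp, ← 𝒱.imap_comp, Category.id_comp, Category.comp_id, Category.id_comp,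
    Category.comp_id]

def evalAt {X : V} (x : 𝒱.unit ⟶ X) (Y : V) : 𝒱.ihom X Y ⟶ Y :=
  𝒱.imap x (𝟙 Y) ≫ 𝒱.i Y

lemma L_comp_imap_evalAt {X : V} (x : 𝒱.unit ⟶ X) (Y Z : V) :
    𝒱.L X Y Z ≫ 𝒱.imap (𝟙 (𝒱.ihom X Y)) (𝒱.evalAt x Z) = 𝒱.imap (𝒱.evalAt x Y) (𝟙 Z) :=
  calc 𝒱.L X Y Z ≫ 𝒱.imap (𝟙 (𝒱.ihom X Y)) (𝒱.evalAt x Z)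
      = (𝒱.L X Y Z ≫ 𝒱.imap (𝟙 (𝒱.ihom X Y)) (𝒱.imap x (𝟙 Z))) ≫
          𝒱.imap (𝟙 (𝒱.ihom X Y)) (𝒱.i Z) := by
        rw [evalAt, imap_comp_right_s7, Category.assoc]
    _ = (𝒱.L 𝒱.unit Y Z ≫ 𝒱.imap (𝒱.imap x (𝟙 Y)) (𝟙 (𝒱.ihom 𝒱.unit Z))) ≫
          𝒱.imap (𝟙 (𝒱.ihom X Y)) (𝒱.i Z) := by
        rw [𝒱.L_extranatural]
    _ = (𝒱.L 𝒱.unit Y Z ≫ 𝒱.imap (𝟙 (𝒱.ihom 𝒱.unit Y)) (𝒱.i Z)) ≫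
          𝒱.imap (𝒱.imap x (𝟙 Y)) (𝟙 Z) := by
        rw [Category.assoc, Category.assoc, imap_left_comm_right]
    _ = 𝒱.imap (𝒱.evalAt x Y) (𝟙 Z) := by
        rw [𝒱.SCC4, evalAt, imap_comp_left_s7]

end SkewClosedStruct

/-- (Street, "Skew-closed categories", Example in §3.)
For a morphism `f : I ⟶ 𝒜(A,B)`, the family
`𝒜(f,C) = i ∘ [f,1] ∘ L^A_{B,C} : 𝒜(B,C) ⟶ 𝒜(A,C)`
is a `𝒱`-natural transformation `𝒜(B,-) ⇒ 𝒜(A,-)` between representable `𝒱`-functors. -/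
theorem precompose_is_V_natural {V : Type u} [Category.{v} V] (𝒱 : SkewClosedStruct V)
    (𝒜 : VCat.{v, u, u} V 𝒱) (A B : 𝒜.Obj) (f : 𝒱.unit ⟶ 𝒜.Hom A B) :
    ∀ C D : 𝒜.Obj,
      𝒜.comp A C D ≫
          𝒱.imap (𝒜.comp A B C ≫ 𝒱.imap f (𝟙 (𝒜.Hom A C)) ≫ 𝒱.i (𝒜.Hom A C))
            (𝟙 (𝒜.Hom A D))
        = 𝒜.comp B C D ≫
            𝒱.imap (𝟙 (𝒜.Hom B C))
              (𝒜.comp A B D ≫ 𝒱.imap f (𝟙 (𝒜.Hom A D)) ≫ 𝒱.i (𝒜.Hom A D)) := by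
  intro C D
  change 𝒜.comp A C D ≫ 𝒱.imap (𝒜.comp A B C ≫ 𝒱.evalAt f _) (𝟙 _)
    = 𝒜.comp B C D ≫ 𝒱.imap (𝟙 _) (𝒜.comp A B D ≫ 𝒱.evalAt f _)
  calc 𝒜.comp A C D ≫ 𝒱.imap (𝒜.comp A B C ≫ 𝒱.evalAt f _) (𝟙 _)
      = 𝒜.comp A C D ≫ 𝒱.L _ _ _ ≫ 𝒱.imap (𝟙 _) (𝒱.evalAt f _) ≫
          𝒱.imap (𝒜.comp A B C) (𝟙 _) := by
        rw [𝒱.imap_comp_left_s7, ← 𝒱.L_comp_imap_evalAt, Category.assoc]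
    _ = (𝒜.comp A C D ≫ 𝒱.L _ _ _ ≫ 𝒱.imap (𝒜.comp A B C) (𝟙 _)) ≫
          𝒱.imap (𝟙 _) (𝒱.evalAt f _) := by
        rw [← 𝒱.imap_left_comm_right]
        simp only [Category.assoc]
    _ = 𝒜.comp B C D ≫ 𝒱.imap (𝟙 _) (𝒜.comp A B D ≫ 𝒱.evalAt f _) := by
        rw [𝒜.EC1, 𝒱.imap_comp_right_s7, Category.assoc]
end

section
/- Let 𝒱 be a left skew-closed category, 𝒜 a 𝒱-category, and A, B objects of 𝒜. Every 𝒱-natural transformation θ : 𝒜(B,-) ⇒ 𝒜(A,-) between the representable 𝒱-functors is of the form 𝒜(f,-), with components i ∘ [f,1] ∘ L^A_{B,C}, for a unique morphism f : I → 𝒜(A,B), namely f = θ_B ∘ j_B. -/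
open CategoryTheory

universe v u w

namespace SkewClosedStruct

variable {V : Type u} [Category.{v} V] (𝒱 : SkewClosedStruct V)

lemma imap_comp_imap_id {X X' Y Y' : V} (x : X' ⟶ X) (g : Y ⟶ Y') :
    𝒱.imap x (𝟙 Y) ≫ 𝒱.imap (𝟙 X') g = 𝒱.imap (𝟙 X) g ≫ 𝒱.imap x (𝟙 Y') := by
  rw [← 𝒱.imap_comp, ← 𝒱.imap_comp]
  simp only [Category.id_comp, Category.comp_id]

lemma evalAt_comp {X X' : V} (x : 𝒱.unit ⟶ X) (h : X ⟶ X') (Y : V) :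
    𝒱.evalAt (x ≫ h) Y = 𝒱.imap h (𝟙 Y) ≫ 𝒱.evalAt x Y := by
  rw [evalAt, evalAt, ← Category.assoc, ← 𝒱.imap_comp, Category.comp_id]

lemma imap_id_comp_evalAt {X Y Y' : V} (x : 𝒱.unit ⟶ X) (g : Y ⟶ Y') :
    𝒱.imap (𝟙 X) g ≫ 𝒱.evalAt x Y' = 𝒱.evalAt x Y ≫ g := by
  rw [evalAt, evalAt, ← Category.assoc, ← imap_comp_imap_id, Category.assoc, 𝒱.i_natural,
    Category.assoc]

lemma j_comp_evalAt {X : V} (x : 𝒱.unit ⟶ X) : 𝒱.j X ≫ 𝒱.evalAt x X = x := by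
  rw [evalAt, ← Category.assoc, ← 𝒱.j_natural, Category.assoc, 𝒱.i_natural,
    ← Category.assoc, 𝒱.SCC5, Category.id_comp]

end SkewClosedStruct

namespace VCat

open SkewClosedStruct

variable {V : Type u} [Category.{v} V] {𝒱 : SkewClosedStruct V} (𝒜 : VCat.{v, u, w} V 𝒱)

/-- The component at `C` of the representable `𝒱`-natural transformation
`𝒜(f,-) : 𝒜(B,-) ⇒ 𝒜(A,-)`. -/
def precomp {A B : 𝒜.Obj} (f : 𝒱.unit ⟶ 𝒜.Hom A B) (C : 𝒜.Obj) : 𝒜.Hom B C ⟶ 𝒜.Hom A C :=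
  𝒜.comp A B C ≫ 𝒱.evalAt f (𝒜.Hom A C)

lemma id_comp_precomp {A B : 𝒜.Obj} (f : 𝒱.unit ⟶ 𝒜.Hom A B) : 𝒜.id B ≫ 𝒜.precomp f B = f := by
  rw [precomp, ← Category.assoc, 𝒜.EC3, j_comp_evalAt]

lemma comp_evalAt_id (A C : 𝒜.Obj) :
    𝒜.comp A A C ≫ 𝒱.evalAt (𝒜.id A) (𝒜.Hom A C) = 𝟙 (𝒜.Hom A C) :=
  𝒜.EC2 A C

/-- Enriched Yoneda: follow the naturality square at `(B, C)` by evaluation at `j_B`; on the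
right, evaluation at `j_B` after `L^B` is the identity by `EC2`, leaving `θ_C`. -/
lemma precomp_id_comp {A B C : 𝒜.Obj} (θB : 𝒜.Hom B B ⟶ 𝒜.Hom A B) (θC : 𝒜.Hom B C ⟶ 𝒜.Hom A C)
    (hθ : 𝒜.comp A B C ≫ 𝒱.imap θB (𝟙 (𝒜.Hom A C))
      = 𝒜.comp B B C ≫ 𝒱.imap (𝟙 (𝒜.Hom B B)) θC) :
    𝒜.precomp (𝒜.id B ≫ θB) C = θC := by
  rw [precomp, evalAt_comp, ← Category.assoc, hθ, Category.assoc, imap_id_comp_evalAt,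
    ← Category.assoc, comp_evalAt_id, Category.id_comp]

end VCat

/-- (Street, "Skew-closed categories", Example 3.6 and §4.)
Every `𝒱`-natural transformation `θ : 𝒜(B,-) ⇒ 𝒜(A,-)` between representable
`𝒱`-functors is of the form `𝒜(f,-)`, with components `i ∘ [f,1] ∘ L^A_{B,C}`,
for a unique `f : I ⟶ 𝒜(A,B)`, namely `f = θ_B ∘ j_B`. -/
theorem V_natural_between_representables {V : Type u} [Category.{v} V]
    (𝒱 : SkewClosedStruct V) (𝒜 : VCat.{v, u, u} V 𝒱) (A B : 𝒜.Obj)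
    (θ : ∀ C, 𝒜.Hom B C ⟶ 𝒜.Hom A C)
    (θ_nat : ∀ C D : 𝒜.Obj,
      𝒜.comp A C D ≫ 𝒱.imap (θ C) (𝟙 (𝒜.Hom A D))
        = 𝒜.comp B C D ≫ 𝒱.imap (𝟙 (𝒜.Hom B C)) (θ D)) :
    ∀ f : 𝒱.unit ⟶ 𝒜.Hom A B,
      (∀ C, θ C = 𝒜.comp A B C ≫ 𝒱.imap f (𝟙 (𝒜.Hom A C)) ≫ 𝒱.i (𝒜.Hom A C)) ↔
        f = 𝒜.id B ≫ θ B := by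
  intro f
  change (∀ C, θ C = 𝒜.precomp f C) ↔ _
  constructor
  · intro hθ
    rw [hθ B, VCat.id_comp_precomp]
  · rintro rfl C
    exact (VCat.precomp_id_comp 𝒜 (θ B) (θ C) (θ_nat B C)).symm
end

section
/- Let 𝒱 be a left skew-closed category, 𝒜 a 𝒱-category, and P a presheaf on 𝒜. Then the family of morphisms j_{PA} : I → [PA,PA] is a cone over the diagram defining the presheaf hom Â(P,P), i.e. [1,P_{A,B}] ∘ j_{PA} = [P_{A,B},1] ∘ L^{𝒜(B,A)}_{PB,PB} ∘ j_{PB} for all objects A, B of 𝒜; consequently, if Â(P,P) exists there is a unique morphism j_P : I → Â(P,P) with p_A ∘ j_P = j_{PA} for all A. -/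
open CategoryTheory

universe v u w

theorem isPshCone_j {V : Type u} [Category.{v} V] (𝒱 : SkewClosedStruct V)
    (𝒜 : VCat.{v, u, w} V 𝒱) (PO : 𝒜.Obj → V)
    (PM : ∀ A B, PO A ⟶ 𝒱.ihom (𝒜.Hom B A) (PO B)) :
    IsPshCone 𝒱 𝒜 PO PM PO PM 𝒱.unit (fun A => 𝒱.j (PO A)) := by
  intro A B
  rw [𝒱.j_natural (PM A B), ← 𝒱.SCC3 (𝒜.Hom B A) (PO B), Category.assoc]

/-- (Street, "Skew-closed categories", §5.)
For a presheaf `P` on `𝒜`, the family `j_{PA} : I ⟶ [PA,PA]` is a cone over the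
diagram defining the presheaf hom `Â(P,P)`; consequently, if `Â(P,P)` exists (as a
limit `(H, p)` of that diagram), there is a unique `j_P : I ⟶ Â(P,P)` with
`p_A ∘ j_P = j_{PA}` for all `A`. -/
theorem unit_cone_for_presheaf_hom {V : Type u} [Category.{v} V]
    (𝒱 : SkewClosedStruct V) (𝒜 : VCat.{v, u, w} V 𝒱) (P : VPresheaf 𝒜) :
    IsPshCone 𝒱 𝒜 P.obj P.map P.obj P.map 𝒱.unit (fun A => 𝒱.j (P.obj A)) ∧
    (∀ (H : V) (p : ∀ A, H ⟶ 𝒱.ihom (P.obj A) (P.obj A)),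
      IsPshCone 𝒱 𝒜 P.obj P.map P.obj P.map H p →
      (∀ (X : V) (ξ : ∀ A, X ⟶ 𝒱.ihom (P.obj A) (P.obj A)),
        IsPshCone 𝒱 𝒜 P.obj P.map P.obj P.map X ξ →
        ∃! f : X ⟶ H, ∀ A, f ≫ p A = ξ A) →
      ∃! jP : 𝒱.unit ⟶ H, ∀ A, jP ≫ p A = 𝒱.j (P.obj A)) := by
  have hj : IsPshCone 𝒱 𝒜 P.obj P.map P.obj P.map 𝒱.unit (fun A => 𝒱.j (P.obj A)) :=
    isPshCone_j 𝒱 𝒜 P.obj P.map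
  exact ⟨hj, fun H p _ hlim => hlim 𝒱.unit (fun A => 𝒱.j (P.obj A)) hj⟩
end

section
/- Let 𝒱 be a left skew-monoidal category such that each functor -⊗B has a right adjoint [B,-], and regard 𝒱 as a left skew-closed category via the correspondence of data (with j = [1,ℓ]∘d where d = π(1_{I⊗A}), and i determined by 𝒱(1,i)∘π = 𝒱(r,1)). Then 𝒱 is left normal — i.e., for all objects A, B the function 𝒱(A,B) → 𝒱(I,[A,B]) sending h to [1_A,h] ∘ j_A is a bijection — if and only if the left unit constraint ℓ_A : I⊗A → A is invertible for every object A. -/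
/-! Naturality of `π` in its last variable gives `[1,h] ∘ j_A = π(h ∘ ℓ_A)`, so left normality
says that precomposition with `ℓ_A` is a bijection `𝒱(A,B) ≅ 𝒱(I⊗A,B)` for every `B`;
by the Yoneda lemma this is exactly invertibility of `ℓ_A`. -/

open CategoryTheory

universe v u w

/-- A left skew-monoidal structure on a category `C` (Szlachányi; Street,
"Skew-closed categories", §7). -/
structure SkewMonoidalStruct (C : Type u) [Category.{v} C] where
  ten : C → C → C
  tmap : ∀ {A A' B B' : C}, (A ⟶ A') → (B ⟶ B') → (ten A B ⟶ ten A' B')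
  tmap_id : ∀ (A B : C), tmap (𝟙 A) (𝟙 B) = 𝟙 (ten A B)
  tmap_comp : ∀ {A A' A'' B B' B'' : C} (f : A ⟶ A') (f' : A' ⟶ A'') (g : B ⟶ B')
      (g' : B' ⟶ B''), tmap (f ≫ f') (g ≫ g') = tmap f g ≫ tmap f' g'
  unit : C
  a : ∀ A B C' : C, ten (ten A B) C' ⟶ ten A (ten B C')
  a_natural : ∀ {A A' B B' C₁ C₁' : C} (f : A ⟶ A') (g : B ⟶ B') (h : C₁ ⟶ C₁'),
      tmap (tmap f g) h ≫ a A' B' C₁' = a A B C₁ ≫ tmap f (tmap g h)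
  l : ∀ A : C, ten unit A ⟶ A
  l_natural : ∀ {A B : C} (f : A ⟶ B), tmap (𝟙 unit) f ≫ l B = l A ≫ f
  r : ∀ A : C, A ⟶ ten A unit
  r_natural : ∀ {A B : C} (f : A ⟶ B), f ≫ r B = r A ≫ tmap f (𝟙 unit)
  M1 : ∀ A B C₁ D : C,
      tmap (a A B C₁) (𝟙 D) ≫ a A (ten B C₁) D ≫ tmap (𝟙 A) (a B C₁ D)
        = a (ten A B) C₁ D ≫ a A B (ten C₁ D)
  M2 : ∀ A B : C, tmap (r A) (𝟙 B) ≫ a A unit B ≫ tmap (𝟙 A) (l B) = 𝟙 (ten A B)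
  M3 : ∀ A B : C, a unit A B ≫ l (ten A B) = tmap (l A) (𝟙 B)
  M4 : ∀ A B : C, r (ten A B) ≫ a A B unit = tmap (𝟙 A) (r B)
  M5 : r unit ≫ l unit = 𝟙 unit

section Thm11

variable {C : Type u} [Category.{v} C] (Cm : SkewMonoidalStruct C) (E : HomData C)
variable (π : ∀ A B D : C, (Cm.ten A B ⟶ D) ≃ (A ⟶ E.obj B D))

/-- The induced `j_A = [1,ℓ_A] ∘ d : I ⟶ [A,A]` of the skew-closed structure obtained
from a closed left skew-monoidal structure. -/
def inducedJ (A : C) : Cm.unit ⟶ E.obj A A :=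
  π Cm.unit A (Cm.ten Cm.unit A) (𝟙 (Cm.ten Cm.unit A)) ≫ E.map (𝟙 A) (Cm.l A)

theorem inducedJ_comp_map
    (hπ : ∀ {A B D D' : C} (h : D ⟶ D') (k : Cm.ten A B ⟶ D),
      π A B D' (k ≫ h) = π A B D k ≫ E.map (𝟙 B) h)
    {A B : C} (h : A ⟶ B) :
    inducedJ Cm E π A ≫ E.map (𝟙 A) h = π Cm.unit A B (Cm.l A ≫ h) := by
  rw [inducedJ, Category.assoc, ← E.map_comp, Category.id_comp, ← hπ, Category.id_comp]

theorem left_normal_iff_left_unit_iso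
    (hπ : ∀ {A A' B B' D D' : C} (f : A' ⟶ A) (g : B' ⟶ B) (h : D ⟶ D')
        (k : Cm.ten A B ⟶ D),
      π A' B' D' (Cm.tmap f g ≫ k ≫ h) = f ≫ π A B D k ≫ E.map g h) :
    (∀ A B : C,
      Function.Bijective (fun h : A ⟶ B => inducedJ Cm E π A ≫ E.map (𝟙 A) h)) ↔
      ∀ A : C, IsIso (Cm.l A) := by
  have hπ_right : ∀ {A B D D' : C} (h : D ⟶ D') (k : Cm.ten A B ⟶ D),
      π A B D' (k ≫ h) = π A B D k ≫ E.map (𝟙 B) h := fun h k => by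
    simpa only [Cm.tmap_id, Category.id_comp] using hπ (𝟙 _) (𝟙 _) h k
  refine forall_congr' fun A => ?_
  rw [isIso_iff_coyoneda_map_bijective]
  refine forall_congr' fun B => ?_
  simp only [inducedJ_comp_map Cm E π hπ_right]
  exact Equiv.comp_bijective _ (π Cm.unit A B)

end Thm11
end
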